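/- Let K be a quadratic number field in which 2 is inert, so that 𝔓 = 2·O_K is a prime ideal of O_K. Let p be an odd prime and let (a, b, c) ∈ O_K³ be a non-trivial solution of a^p + b^p + c^p = 0 with 𝔓 ∤ abc. Let E be the Frey curve Y² = X(X − a^p)(X + b^p), with discriminant Δ = 16·a^{2p}·b^{2p}·c^{2p} and j-invariant j = c₄³/Δ where c₄ = 16(a^{2p} − b^p c^p). Then ord_𝔓(Δ) = 4 and j is integral at 𝔓, i.e., ord_𝔓(j) ≥ 0 (so E has potentially good reduction at 𝔓). -/

import Mathlib

/-!
Since `2` generates `𝔓` and `𝔓 ∤ abc`, the discriminant `Δ = 2⁴ (abc)^{2p}` has valuation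
exactly `4`, while `c₄ = 2⁴ (a^{2p} - bᵖcᵖ)` has valuation at least `4`; hence
`ord_𝔓(j) = 3 ord_𝔓(c₄) - 4 ≥ 8`.
-/

open NumberField IsDedekindDomain

open scoped Classical in
/-- The normalized `v`-adic valuation `ord_v : K → ℤ ∪ {+∞}` on the fraction field `K`
of a Dedekind domain `R`, attached to a non-zero prime `v` of `R`; `ord_v (0) = +∞`. -/
noncomputable def ordAt {R : Type*} [CommRing R] [IsDedekindDomain R] {K : Type*} [Field K]
    [Algebra R K] [IsFractionRing R K] (v : HeightOneSpectrum R) (x : K) : WithTop ℤ :=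
  if hx : x = 0 then ⊤
  else ((-Multiplicative.toAdd (WithZero.unzero (((v.valuation K).ne_zero_iff).mpr hx)) : ℤ) : WithTop ℤ)

section ordAt

variable {R : Type*} [CommRing R] [IsDedekindDomain R] {K : Type*} [Field K] [Algebra R K]
  [IsFractionRing R K] (v : HeightOneSpectrum R)

@[simp]
lemma ordAt_zero : ordAt v (0 : K) = ⊤ := by
  simp [ordAt]

lemma ordAt_of_ne_zero {x : K} (hx : x ≠ 0) :
    ordAt v x = ((-WithZero.log (v.valuation K x) : ℤ) : WithTop ℤ) := by
  rw [ordAt, dif_neg hx, WithZero.toAdd_unzero_eq_log]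

lemma ordAt_mul (x y : K) : ordAt v (x * y) = ordAt v x + ordAt v y := by
  rcases eq_or_ne x 0 with rfl | hx
  · simp
  rcases eq_or_ne y 0 with rfl | hy
  · simp
  rw [ordAt_of_ne_zero v hx, ordAt_of_ne_zero v hy, ordAt_of_ne_zero v (mul_ne_zero hx hy),
    map_mul, WithZero.log_mul (by simpa using hx) (by simpa using hy), neg_add, WithTop.coe_add]

@[simp]
lemma ordAt_one : ordAt v (1 : K) = 0 := by
  simp [ordAt_of_ne_zero v one_ne_zero]

lemma ordAt_pow (x : K) (n : ℕ) : ordAt v (x ^ n) = n • ordAt v x := by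
  induction n with
  | zero => simp
  | succ n ih => rw [pow_succ, ordAt_mul, ih, succ_nsmul]

lemma ordAt_div_nonneg {x y : K} (h : ordAt v y ≤ ordAt v x) : 0 ≤ ordAt v (x / y) := by
  rcases eq_or_ne y 0 with rfl | hy
  · simp
  have hy_top : ordAt v y ≠ ⊤ := by simp [ordAt_of_ne_zero v hy]
  rw [← div_mul_cancel₀ x hy, ordAt_mul, ← zero_add (ordAt v y), ← add_assoc, add_zero] at h
  exact (WithTop.add_le_add_iff_right hy_top).mp h

lemma ordAt_algebraMap_of_ne_zero {r : R} (hr : r ≠ 0) :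
    ordAt v (algebraMap R K r) = ((-WithZero.log (v.intValuation r) : ℤ) : WithTop ℤ) := by
  rw [ordAt_of_ne_zero v (IsFractionRing.to_map_ne_zero_of_mem_nonZeroDivisors
    (mem_nonZeroDivisors_of_ne_zero hr)), v.valuation_of_algebraMap]

lemma ordAt_algebraMap_nonneg (r : R) : 0 ≤ ordAt v (algebraMap R K r) := by
  rcases eq_or_ne r 0 with rfl | hr
  · simp
  have hval : WithZero.log (v.intValuation r) ≤ 0 := by
    rw [WithZero.log_le_iff_le_exp (v.intValuation_ne_zero r hr)]
    exact v.intValuation_le_one r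
  rw [ordAt_algebraMap_of_ne_zero v hr]
  exact_mod_cast neg_nonneg.mpr hval

lemma ordAt_algebraMap_eq_zero {r : R} (hr : r ∉ v.asIdeal) : ordAt v (algebraMap R K r) = 0 := by
  have hr0 : r ≠ 0 := fun h => hr (h ▸ v.asIdeal.zero_mem)
  rw [ordAt_algebraMap_of_ne_zero v hr0, HeightOneSpectrum.intValuation_eq_one_iff.mpr hr]
  simp

lemma ordAt_algebraMap_of_asIdeal_eq_span {π : R} (hπ : v.asIdeal = Ideal.span {π}) :
    ordAt v (algebraMap R K π) = 1 := by
  have hπ0 : π ≠ 0 := by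
    rintro rfl
    exact v.ne_bot (by simpa using hπ)
  rw [ordAt_algebraMap_of_ne_zero v hπ0, v.intValuation_singleton hπ0 hπ]
  simp

end ordAt

theorem frey_curve_inert_two_general (K : Type*) [Field K] [NumberField K]
    (v : HeightOneSpectrum (𝓞 K)) (hv : v.asIdeal = Ideal.span {(2 : 𝓞 K)})
    (p : ℕ) (a b c : 𝓞 K) (hndvd : a * b * c ∉ v.asIdeal) :
    ordAt v (algebraMap (𝓞 K) K (16 * a ^ (2 * p) * b ^ (2 * p) * c ^ (2 * p))) = 4 ∧
    0 ≤ ordAt v ((algebraMap (𝓞 K) K (16 * (a ^ (2 * p) - b ^ p * c ^ p))) ^ 3 /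
      algebraMap (𝓞 K) K (16 * a ^ (2 * p) * b ^ (2 * p) * c ^ (2 * p))) := by
  have h2 : ordAt v (algebraMap (𝓞 K) K 2) = 1 := ordAt_algebraMap_of_asIdeal_eq_span v hv
  have h16 : ordAt v (algebraMap (𝓞 K) K 16) = 4 := by
    rw [show (16 : 𝓞 K) = 2 ^ 4 by norm_num, map_pow, ordAt_pow, h2]
    rfl
  have hΔ : ordAt v (algebraMap (𝓞 K) K (16 * a ^ (2 * p) * b ^ (2 * p) * c ^ (2 * p))) = 4 := by
    rw [show 16 * a ^ (2 * p) * b ^ (2 * p) * c ^ (2 * p) = 16 * (a * b * c) ^ (2 * p) by ring,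
      map_mul, map_pow, ordAt_mul, ordAt_pow, h16, ordAt_algebraMap_eq_zero v hndvd, smul_zero,
      add_zero]
  refine ⟨hΔ, ordAt_div_nonneg v ?_⟩
  rw [hΔ, ordAt_pow, map_mul, ordAt_mul, h16]
  calc (4 : WithTop ℤ) ≤ 3 • 4 := by decide
    _ ≤ 3 • (4 + ordAt v (algebraMap (𝓞 K) K (a ^ (2 * p) - b ^ p * c ^ p))) :=
      nsmul_le_nsmul_right (le_add_of_nonneg_right (ordAt_algebraMap_nonneg v _)) 3

/-- **Behaviour of the Frey curve at an inert prime above 2 (Lemma 4.1).**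
Let `K` be a quadratic number field in which `2` is inert, so `𝔓 = 2 𝓞 K` is prime,
`p` an odd prime, and `(a, b, c)` a non-trivial solution of `a ^ p + b ^ p + c ^ p = 0`
in `𝓞 K` with `𝔓 ∤ abc`. Then the discriminant `Δ = 16 a^{2p} b^{2p} c^{2p}` of the
Frey curve `Y² = X(X − aᵖ)(X + bᵖ)` satisfies `ord_𝔓(Δ) = 4`, and its `j`-invariant
`j = c₄³ / Δ`, with `c₄ = 16(a^{2p} − bᵖcᵖ)`, satisfies `ord_𝔓(j) ≥ 0` (potentially
good reduction at `𝔓`). -/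
theorem frey_curve_inert_two (K : Type*) [Field K] [NumberField K]
    (hdeg : Module.finrank ℚ K = 2)
    (v : HeightOneSpectrum (𝓞 K)) (hv : v.asIdeal = Ideal.span {(2 : 𝓞 K)})
    (p : ℕ) (hp : p.Prime) (hodd : Odd p)
    (a b c : 𝓞 K) (habc : a * b * c ≠ 0) (hfermat : a ^ p + b ^ p + c ^ p = 0)
    (hndvd : a * b * c ∉ v.asIdeal) :
    ordAt v (algebraMap (𝓞 K) K (16 * a ^ (2 * p) * b ^ (2 * p) * c ^ (2 * p))) = 4 ∧
    0 ≤ ordAt v ((algebraMap (𝓞 K) K (16 * (a ^ (2 * p) - b ^ p * c ^ p))) ^ 3 /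
      algebraMap (𝓞 K) K (16 * a ^ (2 * p) * b ^ (2 * p) * c ^ (2 * p))) :=
  frey_curve_inert_two_general K v hv p a b c hndvd
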